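/- arXiv:2304.01932 — 7 statements merged into one kernel-verified Lean document; each statement's English description precedes it below -/
import Mathlib

section
/- With f₁, f₂ as above and 0 < λ < 2√3 − 3, let U := B_R(T₀) be the open ball of radius R = λ/(1−λ) centered at T₀ = (1,0). Then f₁(U) ∪ f₂(U) ⊂ U and f₁(U) ∩ f₂(U) = ∅, i.e., the iterated function system {f₁, f₂} satisfies the open set condition with open set U. -/
/-! Each `f_j` is a similarity of ratio `λ`, so it maps `B_R(1)` onto `B_{λR}(f_j 1)` with
`|f_j 1 - 1| = λ`; since `λ + λR = R` both images lie in `B_R(1)`. The centres `f_j 1` are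
`λ√3` apart, and `λ < 2√3 - 3` is exactly `2λR < λ√3`, so the images are disjoint. -/

open Complex Metric

noncomputable def fmap (lam : ℝ) (j : ℕ) (z : ℂ) : ℂ :=
  1 + (lam : ℂ) * Complex.exp ((-1 : ℂ) ^ j * Complex.I * (Real.pi / 3)) * z

open scoped Pointwise in
theorem image_ball_add_smul {𝕜 E : Type*} [NormedField 𝕜] [SeminormedAddCommGroup E]
    [NormedSpace 𝕜 E] (a : E) {k : 𝕜} (hk : k ≠ 0) (c : E) (r : ℝ) :
    (fun z => a + k • z) '' ball c r = ball (a + k • c) (‖k‖ * r) :=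
  calc (fun z => a + k • z) '' ball c r = a +ᵥ k • ball c r := by
        rw [← Set.image_smul, ← Set.image_vadd, Set.image_image]
        rfl
    _ = ball (a + k • c) (‖k‖ * r) := by rw [_root_.smul_ball hk, vadd_ball]; rfl

theorem norm_exp_neg_one_pow_mul_I_mul (j : ℕ) (x : ℝ) :
    ‖exp ((-1 : ℂ) ^ j * I * x)‖ = 1 := by
  rw [show (-1 : ℂ) ^ j * I * x = (((-1) ^ j * x : ℝ) : ℂ) * I by push_cast; ring]
  exact norm_exp_ofReal_mul_I _

theorem norm_exp_neg_mul_I_sub_exp_mul_I (θ : ℝ) :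
    ‖exp (-θ * I) - exp (θ * I)‖ = 2 * |Real.sin θ| := by
  rw [← ofReal_neg, exp_mul_I, exp_mul_I, ← ofReal_cos, ← ofReal_sin, ← ofReal_cos, ← ofReal_sin,
    Real.cos_neg, Real.sin_neg,
    show ((Real.cos θ : ℂ) + ((-Real.sin θ : ℝ) : ℂ) * I - (Real.cos θ + Real.sin θ * I))
      = ((-2 * Real.sin θ : ℝ) : ℂ) * I by push_cast; ring,
    norm_mul, norm_I, mul_one, norm_real, Real.norm_eq_abs, abs_mul]
  norm_num

theorem fmap_eq_add_smul (lam : ℝ) (j : ℕ) :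
    fmap lam j = fun z => 1 + ((lam : ℂ) * exp ((-1 : ℂ) ^ j * I * (Real.pi / 3))) • z := by
  funext z
  simp only [fmap, smul_eq_mul, mul_assoc]

theorem norm_ofReal_mul_exp_neg_one_pow {lam : ℝ} (hlam : 0 ≤ lam) (j : ℕ) :
    ‖(lam : ℂ) * exp ((-1 : ℂ) ^ j * I * (Real.pi / 3))‖ = lam := by
  rw [norm_mul, norm_real, Real.norm_of_nonneg hlam, ← ofReal_ofNat, ← ofReal_div,
    norm_exp_neg_one_pow_mul_I_mul, mul_one]

theorem image_fmap_ball {lam : ℝ} (hlam : 0 < lam) (j : ℕ) (c : ℂ) (r : ℝ) :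
    fmap lam j '' ball c r = ball (fmap lam j c) (lam * r) := by
  have hk : (lam : ℂ) * exp ((-1 : ℂ) ^ j * I * (Real.pi / 3)) ≠ 0 := by
    rw [← norm_ne_zero_iff, norm_ofReal_mul_exp_neg_one_pow hlam.le]
    exact hlam.ne'
  rw [fmap_eq_add_smul, image_ball_add_smul _ hk, norm_ofReal_mul_exp_neg_one_pow hlam.le]

theorem dist_fmap_one_one {lam : ℝ} (hlam : 0 ≤ lam) (j : ℕ) : dist (fmap lam j 1) 1 = lam := by
  rw [dist_eq, fmap, mul_one, add_sub_cancel_left, norm_ofReal_mul_exp_neg_one_pow hlam]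

theorem dist_fmap_one_fmap_two {lam : ℝ} (hlam : 0 ≤ lam) :
    dist (fmap lam 1 1) (fmap lam 2 1) = lam * Real.sqrt 3 := by
  have h1 : (-1 : ℂ) ^ 1 * I * (Real.pi / 3) = -((Real.pi / 3 : ℝ) : ℂ) * I := by push_cast; ring
  have h2 : (-1 : ℂ) ^ 2 * I * (Real.pi / 3) = ((Real.pi / 3 : ℝ) : ℂ) * I := by push_cast; ring
  rw [dist_eq, fmap, fmap, mul_one, mul_one, add_sub_add_left_eq_sub, ← mul_sub, norm_mul,
    norm_real, Real.norm_of_nonneg hlam, h1, h2, norm_exp_neg_mul_I_sub_exp_mul_I,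
    Real.sin_pi_div_three, abs_of_pos (by positivity)]
  ring

/-- Open set condition: for 0 < λ < 2√3 − 3, with U = B_{λ/(1−λ)}(1) one has
f₁(U) ∪ f₂(U) ⊂ U and f₁(U) ∩ f₂(U) = ∅. -/
theorem open_set_condition (lam : ℝ) (h0 : 0 < lam) (h1 : lam < 2 * Real.sqrt 3 - 3) :
    (fmap lam 1 '' ball (1 : ℂ) (lam / (1 - lam)) ∪
        fmap lam 2 '' ball (1 : ℂ) (lam / (1 - lam)) ⊆ ball (1 : ℂ) (lam / (1 - lam))) ∧
      fmap lam 1 '' ball (1 : ℂ) (lam / (1 - lam)) ∩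
        fmap lam 2 '' ball (1 : ℂ) (lam / (1 - lam)) = ∅ := by
  have hsqrt3 : Real.sqrt 3 ^ 2 = 3 := Real.sq_sqrt (by norm_num)
  have hlam1 : 1 - lam ≠ 0 := by nlinarith [Real.sqrt_nonneg 3]
  set R := lam / (1 - lam) with hR
  have hR_fixed : lam + lam * R = R := by
    rw [hR]
    field_simp
    ring
  have h2R : 2 * R ≤ Real.sqrt 3 := by
    rw [hR, ← mul_div_assoc, div_le_iff₀ (by nlinarith [Real.sqrt_nonneg 3])]
    nlinarith
  have hsub : ∀ j, fmap lam j '' ball 1 R ⊆ ball 1 R := fun j => by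
    rw [image_fmap_ball h0]
    exact ball_subset_ball' (by rw [dist_fmap_one_one h0.le]; linarith)
  refine ⟨Set.union_subset (hsub 1) (hsub 2), ?_⟩
  rw [image_fmap_ball h0, image_fmap_ball h0, ← Set.disjoint_iff_inter_eq_empty]
  exact ball_disjoint_ball (by rw [dist_fmap_one_fmap_two h0.le]; nlinarith)
end

section
/- With f₁, f₂ as above and 0 < λ < 2√3 − 3, the attractor A is totally disconnected. -/
/-!
Both maps are similarities of ratio `λ`. They displace `c = 2 / (2 - λ)` by `±i√3λ / (2 - λ)`, so
the attractor lies in the closed disc of radius `r = √3λ / ((2 - λ)(1 - λ))` about `c`, and for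
`λ < 1/2` the images of this disc under `f₁` and `f₂` are disjoint. Hence `A` is the disjoint union
of the compact pieces `f₁(A)` and `f₂(A)`: a preconnected subset of `A` lies in one piece, where it
is the image of a preconnected subset of `A`. The supremum of the diameters of preconnected subsets
of `A` is therefore at most `λ` times itself, hence zero.
-/

open Complex

open Metric Set Topology

theorem ENNReal.eq_zero_of_le_mul_of_lt_one {K : NNReal} (hK : K < 1) {D : ENNReal} (hD : D ≠ ⊤)
    (h : D ≤ K * D) : D = 0 := by
  lift D to NNReal using hD
  norm_cast at h ⊢
  by_contra hD
  exact (mul_lt_of_lt_one_left (pos_iff_ne_zero.mpr hD) hK).not_ge h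

theorem IsPreconnected.exists_subset_of_subset_biUnion {X ι : Type*} [TopologicalSpace X]
    {S : Set ι} (hS : S.Finite) {s : ι → Set X} (hs : ∀ i ∈ S, IsClosed (s i))
    (hdisj : S.PairwiseDisjoint s) {t : Set X} (ht : IsPreconnected t) (hne : t.Nonempty)
    (hts : t ⊆ ⋃ i ∈ S, s i) : ∃ i ∈ S, t ⊆ s i := by
  obtain ⟨x, hxt⟩ := hne
  obtain ⟨i, hiS, hxi⟩ := mem_iUnion₂.mp (hts hxt)
  have hrest : IsClosed (⋃ j ∈ S \ {i}, s j) := hS.sdiff.isClosed_biUnion fun j hj => hs j hj.1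
  have hdisj_rest : Disjoint (s i) (⋃ j ∈ S \ {i}, s j) :=
    disjoint_iUnion₂_right.mpr fun j hj => hdisj hiS hj.1 (Ne.symm hj.2)
  have hcover : t ⊆ s i ∪ ⋃ j ∈ S \ {i}, s j := by
    intro y hyt
    obtain ⟨j, hjS, hyj⟩ := mem_iUnion₂.mp (hts hyt)
    by_cases hji : j = i
    · exact Or.inl (hji ▸ hyj)
    · exact Or.inr (mem_iUnion₂.mpr ⟨j, ⟨hjS, hji⟩, hyj⟩)
  refine ⟨i, hiS, ?_⟩
  rcases isPreconnected_iff_subset_of_disjoint_closed.mp ht _ _ (hs i hiS) hrest hcover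
    (by rw [hdisj_rest.inter_eq, inter_empty]) with hsub | hsub
  · exact hsub
  · exact absurd (hsub hxt) (hdisj_rest.notMem_of_mem_left hxi)

section Contractions

variable {X ι : Type*} [MetricSpace X] {S : Set ι} {f : ι → X → X} {K : NNReal} {A : Set X}

theorem subset_closedBall_of_subset_biUnion_image (hK : K < 1)
    (hf : ∀ i ∈ S, LipschitzWith K (f i)) {c : X} {r : ℝ}
    (hc : ∀ i ∈ S, dist (f i c) c ≤ (1 - K) * r) (hA : IsCompact A)
    (hsub : A ⊆ ⋃ i ∈ S, f i '' A) : A ⊆ closedBall c r := by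
  rcases A.eq_empty_or_nonempty with rfl | hne
  · exact empty_subset _
  obtain ⟨x₀, hx₀, hmax⟩ :=
    hA.exists_isMaxOn hne (continuous_id.dist continuous_const).continuousOn
  suffices dist x₀ c ≤ r from fun x hx => (hmax hx).trans this
  obtain ⟨i, hiS, y, hyA, rfl⟩ := by simpa using hsub hx₀
  have hK' : (K : ℝ) < 1 := hK
  have hy : dist y c ≤ dist (f i y) c := hmax hyA
  have := calc dist (f i y) c ≤ dist (f i y) (f i c) + dist (f i c) c := dist_triangle _ _ _
    _ ≤ K * dist y c + (1 - K) * r := add_le_add ((hf i hiS).dist_le_mul _ _) (hc i hiS)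
    _ ≤ K * dist (f i y) c + (1 - K) * r := by gcongr
  nlinarith

theorem isTotallyDisconnected_of_eq_biUnion_image (hS : S.Finite) (hK : K < 1)
    (hf : ∀ i ∈ S, LipschitzWith K (f i)) (hemb : ∀ i ∈ S, IsEmbedding (f i))
    (hA : IsCompact A) (hfix : A = ⋃ i ∈ S, f i '' A)
    (hdisj : S.PairwiseDisjoint fun i => f i '' A) : IsTotallyDisconnected A := by
  set D := ⨆ (t : Set X) (_ : t ⊆ A) (_ : IsPreconnected t), ediam t
  have hle_D {t : Set X} (htA : t ⊆ A) (ht : IsPreconnected t) : ediam t ≤ D :=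
    le_iSup₂_of_le t htA (le_iSup (fun _ => ediam t) ht)
  have hcontract : D ≤ K * D := by
    refine iSup₂_le fun t htA => iSup_le fun ht => ?_
    rcases t.eq_empty_or_nonempty with rfl | hne
    · simp
    obtain ⟨i, hiS, hti⟩ := ht.exists_subset_of_subset_biUnion hS
      (fun i hi => (hA.image (hf i hi).continuous).isClosed) hdisj hne (hfix ▸ htA)
    have himage : f i '' (A ∩ f i ⁻¹' t) = t := by
      rw [image_inter_preimage, inter_eq_right.mpr hti]
    have hpre : IsPreconnected (A ∩ f i ⁻¹' t) :=
      (hemb i hiS).isInducing.isPreconnected_image.mp (by rwa [himage])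
    calc ediam t = ediam (f i '' (A ∩ f i ⁻¹' t)) := by rw [himage]
      _ ≤ K * ediam (A ∩ f i ⁻¹' t) := (hf i hiS).ediam_image_le _
      _ ≤ K * D := by gcongr; exact hle_D inter_subset_left hpre
  have hD : D = 0 := by
    refine ENNReal.eq_zero_of_le_mul_of_lt_one hK ?_ hcontract
    exact ne_top_of_le_ne_top hA.isBounded.ediam_ne_top
      (iSup₂_le fun t htA => iSup_le fun _ => ediam_mono htA)
  intro t htA ht
  exact ediam_eq_zero_iff.mp (nonpos_iff_eq_zero.mp (hD ▸ hle_D htA ht))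

end Contractions

theorem exp_neg_one_pow_mul_I_mul_pi_div_three (j : ℕ) :
    exp ((-1 : ℂ) ^ j * I * (Real.pi / 3)) = 1 / 2 + (-1) ^ j * (Real.sqrt 3 / 2) * I := by
  rcases Nat.even_or_odd j with hj | hj
  · rw [hj.neg_one_pow, show (1 : ℂ) * I * (Real.pi / 3) = (Real.pi / 3 : ℝ) * I by push_cast; ring,
      exp_mul_I, ← ofReal_cos, ← ofReal_sin, Real.cos_pi_div_three, Real.sin_pi_div_three]
    push_cast; ring
  · rw [hj.neg_one_pow, show (-1 : ℂ) * I * (Real.pi / 3) = (-(Real.pi / 3) : ℝ) * I by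
        push_cast; ring, exp_mul_I, ← ofReal_cos, ← ofReal_sin, Real.cos_neg, Real.sin_neg,
      Real.cos_pi_div_three, Real.sin_pi_div_three]
    push_cast; ring

theorem norm_exp_neg_one_pow_mul_I_mul_pi_div_three (j : ℕ) :
    ‖exp ((-1 : ℂ) ^ j * I * (Real.pi / 3))‖ = 1 := by
  rw [show (-1 : ℂ) ^ j * I * (Real.pi / 3) = ((-1) ^ j * (Real.pi / 3) : ℝ) * I by push_cast; ring]
  exact norm_exp_ofReal_mul_I _

theorem lipschitzWith_fmap (lam : ℝ) (j : ℕ) : LipschitzWith ‖lam‖₊ (fmap lam j) := by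
  refine LipschitzWith.of_dist_le_mul fun z w => le_of_eq ?_
  rw [dist_eq, dist_eq, fmap, fmap, show ∀ a : ℂ, 1 + a * z - (1 + a * w) = a * (z - w) by
    intro a; ring, norm_mul, norm_mul, norm_exp_neg_one_pow_mul_I_mul_pi_div_three, norm_real,
    mul_one, coe_nnnorm]

theorem isEmbedding_fmap {lam : ℝ} (hlam : lam ≠ 0) (j : ℕ) : IsEmbedding (fmap lam j) := by
  have ha : (lam : ℂ) * exp ((-1 : ℂ) ^ j * I * (Real.pi / 3)) ≠ 0 :=
    mul_ne_zero (ofReal_ne_zero.mpr hlam) (exp_ne_zero _)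
  exact ((Homeomorph.mulLeft₀ _ ha).trans (Homeomorph.addLeft 1)).isEmbedding

/-- The fixed point of the averaged map `(f₁ + f₂) / 2 = 1 + λ z / 2`; `f₁` and `f₂` move it by
opposite vertical vectors. -/
noncomputable def fmapCenter (lam : ℝ) : ℂ := ((2 / (2 - lam) : ℝ) : ℂ)

noncomputable def fmapRadius (lam : ℝ) : ℝ := |Real.sqrt 3 * lam / (2 - lam)| / (1 - lam)

theorem fmap_fmapCenter {lam : ℝ} (hlam : lam ≠ 2) (j : ℕ) :
    fmap lam j (fmapCenter lam) =
      fmapCenter lam + (-1) ^ j * (Real.sqrt 3 * lam / (2 - lam) : ℝ) * I := by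
  have h2 : (2 : ℂ) - lam ≠ 0 := by exact_mod_cast sub_ne_zero.mpr (Ne.symm hlam)
  rw [fmap, fmapCenter, exp_neg_one_pow_mul_I_mul_pi_div_three]
  push_cast
  field_simp
  ring

theorem dist_fmap_fmapCenter {lam : ℝ} (hlam : lam ≠ 2) (j : ℕ) :
    dist (fmap lam j (fmapCenter lam)) (fmapCenter lam) = |Real.sqrt 3 * lam / (2 - lam)| := by
  rw [dist_eq, fmap_fmapCenter hlam, add_sub_cancel_left, norm_mul, norm_mul, norm_pow,
    norm_neg, norm_one, one_pow, one_mul, norm_I, mul_one, norm_real, Real.norm_eq_abs]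

theorem dist_fmap_one_fmap_two_fmapCenter {lam : ℝ} (hlam : lam ≠ 2) :
    dist (fmap lam 1 (fmapCenter lam)) (fmap lam 2 (fmapCenter lam)) =
      2 * |Real.sqrt 3 * lam / (2 - lam)| := by
  rw [dist_eq, fmap_fmapCenter hlam, fmap_fmapCenter hlam,
    show ∀ c h : ℂ, c + (-1) ^ 1 * h * I - (c + (-1) ^ 2 * h * I) = -(2 * h) * I by
      intro c h; ring,
    norm_mul, norm_neg, norm_I, mul_one, norm_mul, Complex.norm_two, norm_real, Real.norm_eq_abs]

theorem disjoint_image_fmap_one_fmap_two_closedBall {lam : ℝ} (h0 : 0 < lam) (hlam : lam < 1 / 2) :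
    Disjoint (fmap lam 1 '' closedBall (fmapCenter lam) (fmapRadius lam))
      (fmap lam 2 '' closedBall (fmapCenter lam) (fmapRadius lam)) := by
  set h := |Real.sqrt 3 * lam / (2 - lam)|
  rw [fmapRadius]
  have hh : 0 < h := abs_pos.mpr (div_pos (mul_pos (by positivity) h0) (by linarith)).ne'
  have hK : (‖lam‖₊ : ℝ) = lam := by rw [coe_nnnorm, Real.norm_of_nonneg h0.le]
  refine Disjoint.mono ((lipschitzWith_fmap lam 1).mapsTo_closedBall _ _).image_subset
    ((lipschitzWith_fmap lam 2).mapsTo_closedBall _ _).image_subset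
    (closedBall_disjoint_closedBall ?_)
  have hlt : lam * (h / (1 - lam)) < h := by
    rw [← mul_div_assoc, div_lt_iff₀ (by linarith)]
    nlinarith
  rw [dist_fmap_one_fmap_two_fmapCenter (by linarith), hK]
  linarith

theorem attractor_totallyDisconnected_general (lam : ℝ) (h0 : 0 < lam)
    (h1 : lam < 2 * Real.sqrt 3 - 3)
    (A : Set ℂ) (hcpt : IsCompact A)
    (hA : A = fmap lam 1 '' A ∪ fmap lam 2 '' A) :
    IsTotallyDisconnected A := by
  have hlam : lam < 1 / 2 := by
    have : Real.sqrt 3 < 7 / 4 := by rw [Real.sqrt_lt' (by norm_num)]; norm_num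
    linarith
  have hK : ‖lam‖₊ < 1 := by
    rw [← NNReal.coe_lt_coe, coe_nnnorm, Real.norm_of_nonneg h0.le, NNReal.coe_one]; linarith
  have hfix : A = ⋃ j ∈ ({1, 2} : Set ℕ), fmap lam j '' A := by rw [biUnion_pair]; exact hA
  have hball : A ⊆ closedBall (fmapCenter lam) (fmapRadius lam) := by
    refine subset_closedBall_of_subset_biUnion_image hK (fun j _ => lipschitzWith_fmap lam j)
      (fun j _ => ?_) hcpt hfix.subset
    rw [dist_fmap_fmapCenter (by linarith), fmapRadius, coe_nnnorm, Real.norm_of_nonneg h0.le,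
      mul_div_cancel₀ _ (by linarith)]
  have hdisj : Disjoint (fmap lam 1 '' A) (fmap lam 2 '' A) :=
    (disjoint_image_fmap_one_fmap_two_closedBall h0 hlam).mono (image_mono hball) (image_mono hball)
  exact isTotallyDisconnected_of_eq_biUnion_image (toFinite _) hK
    (fun j _ => lipschitzWith_fmap lam j) (fun j _ => isEmbedding_fmap h0.ne' j) hcpt hfix
    (pairwise_pair.mpr fun _ => ⟨hdisj, hdisj.symm⟩)

/-- For 0 < λ < 2√3 − 3, the attractor A of {f₁, f₂} is totally disconnected. -/
theorem attractor_totallyDisconnected (lam : ℝ) (h0 : 0 < lam)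
    (h1 : lam < 2 * Real.sqrt 3 - 3)
    (A : Set ℂ) (hne : A.Nonempty) (hcpt : IsCompact A)
    (hA : A = fmap lam 1 '' A ∪ fmap lam 2 '' A) :
    IsTotallyDisconnected A :=
  attractor_totallyDisconnected_general lam h0 h1 A hcpt hA
end

section
/- Fix 0 < λ < 1/10 and let A be the attractor of the maps f_j(z) = 1 + λ e^{(−1)^j iπ/3} z (j = 1,2), and P := (1 + λ/2, 0). Then A is contained in the open ball B_λ(P). -/
/-!
Since ‖f_j z‖ ≤ 1 + λ‖z‖, a point of A of maximal norm shows ‖z‖ ≤ 1/(1 - λ) on A. Every point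
of A is f_j(f_k(u)) with u ∈ A, and
f_j(f_k(u)) - P = λ(e_j - 1/2) + λ² e_j e_k u  with  e_j = e^{±iπ/3},  |e_j - 1/2| = √3/2,
so its distance from P is at most (√3/2)λ + λ²/(1 - λ), which is < λ for λ < 1/10.
-/

open Complex Metric

theorem IsCompact.norm_le_div_one_sub {E ι : Type*} [SeminormedAddCommGroup E] {A : Set E}
    (hA : IsCompact A) (f : ι → E → E) (hcover : A ⊆ ⋃ i, f i '' A) {a c : ℝ} (hc0 : 0 ≤ c)
    (hc1 : c < 1) (hf : ∀ i x, ‖f i x‖ ≤ a + c * ‖x‖) {z : E} (hz : z ∈ A) :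
    ‖z‖ ≤ a / (1 - c) := by
  obtain ⟨z₀, hz₀, hmax⟩ := hA.exists_isMaxOn ⟨z, hz⟩ continuous_norm.continuousOn
  obtain ⟨i, w, hw, rfl⟩ := Set.mem_iUnion.1 (hcover hz₀)
  have hself : ‖f i w‖ ≤ a + c * ‖f i w‖ := (hf i w).trans (by gcongr; exact hmax hw)
  have hz_le : ‖z‖ ≤ ‖f i w‖ := hmax hz
  rw [le_div_iff₀ (by linarith)]
  nlinarith

noncomputable def fmapRotation (j : ℕ) : ℂ :=
  exp ((-1 : ℂ) ^ j * I * (Real.pi / 3))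

theorem fmap_apply (lam : ℝ) (j : ℕ) (z : ℂ) : fmap lam j z = 1 + lam * fmapRotation j * z := rfl

theorem fmapRotation_eq_exp_ofReal_mul_I (j : ℕ) :
    fmapRotation j = exp ((((-1 : ℝ) ^ j * (Real.pi / 3) : ℝ) : ℂ) * I) := by
  rw [fmapRotation]; push_cast; ring_nf

theorem norm_fmapRotation (j : ℕ) : ‖fmapRotation j‖ = 1 := by
  rw [fmapRotation_eq_exp_ofReal_mul_I, norm_exp_ofReal_mul_I]

theorem norm_fmapRotation_sub_half (j : ℕ) : ‖fmapRotation j - 1 / 2‖ = Real.sqrt 3 / 2 := by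
  rw [fmapRotation_eq_exp_ofReal_mul_I, exp_mul_I, ← ofReal_cos, ← ofReal_sin]
  rcases neg_one_pow_eq_or ℝ j with h | h <;>
    simp [h, Real.cos_pi_div_three, Real.sin_pi_div_three]

theorem norm_fmap_le {lam : ℝ} (hlam : 0 ≤ lam) (j : ℕ) (z : ℂ) :
    ‖fmap lam j z‖ ≤ 1 + lam * ‖z‖ := by
  calc ‖fmap lam j z‖ ≤ ‖(1 : ℂ)‖ + ‖(lam : ℂ) * fmapRotation j * z‖ := norm_add_le _ _
    _ = 1 + lam * ‖z‖ := by
      rw [norm_mul, norm_mul, norm_fmapRotation, norm_real, Real.norm_of_nonneg hlam, norm_one,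
        mul_one]

theorem fmap_fmap_sub (lam : ℝ) (j k : ℕ) (u : ℂ) :
    fmap lam j (fmap lam k u) - ((1 + lam / 2 : ℝ) : ℂ) =
      lam * (fmapRotation j - 1 / 2) + lam ^ 2 * (fmapRotation j * fmapRotation k * u) := by
  simp only [fmap_apply]; push_cast; ring

theorem norm_fmap_fmap_sub_le {lam : ℝ} (hlam : 0 ≤ lam) (j k : ℕ) (u : ℂ) :
    ‖fmap lam j (fmap lam k u) - ((1 + lam / 2 : ℝ) : ℂ)‖ ≤
      lam * (Real.sqrt 3 / 2) + lam ^ 2 * ‖u‖ := by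
  rw [fmap_fmap_sub]
  refine (norm_add_le _ _).trans_eq ?_
  rw [norm_mul, norm_mul, norm_mul, norm_mul, norm_pow, norm_real, Real.norm_of_nonneg hlam,
    norm_fmapRotation_sub_half, norm_fmapRotation, norm_fmapRotation, one_mul, one_mul]

theorem mul_sqrt_three_div_two_add_sq_div_one_sub_lt {lam : ℝ} (h0 : 0 < lam)
    (h1 : lam < 1 / 10) : lam * (Real.sqrt 3 / 2) + lam ^ 2 / (1 - lam) < lam := by
  have hsqrt : Real.sqrt 3 < 16 / 9 := by
    rw [Real.sqrt_lt' (by norm_num)]; norm_num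
  have hfrac : lam / (1 - lam) < 1 / 9 := by
    rw [div_lt_iff₀ (by linarith)]; linarith
  calc lam * (Real.sqrt 3 / 2) + lam ^ 2 / (1 - lam)
      = lam * (Real.sqrt 3 / 2 + lam / (1 - lam)) := by ring
    _ < lam * 1 := by gcongr; linarith
    _ = lam := mul_one lam

theorem attractor_subset_ball_general (lam : ℝ) (h0 : 0 < lam) (h1 : lam < 1 / 10)
    (A : Set ℂ) (hcpt : IsCompact A)
    (hA : A = fmap lam 1 '' A ∪ fmap lam 2 '' A) :
    A ⊆ ball (((1 + lam / 2 : ℝ) : ℂ)) lam := by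
  have hcover : A ⊆ ⋃ j, fmap lam j '' A :=
    hA.le.trans (Set.union_subset (Set.subset_iUnion (fun j ↦ fmap lam j '' A) 1)
      (Set.subset_iUnion (fun j ↦ fmap lam j '' A) 2))
  have hbound : ∀ u ∈ A, ‖u‖ ≤ 1 / (1 - lam) := fun u hu ↦
    hcpt.norm_le_div_one_sub _ hcover h0.le (by linarith) (norm_fmap_le h0.le) hu
  intro z hz
  obtain ⟨j, w, hw, rfl⟩ := Set.mem_iUnion.1 (hcover hz)
  obtain ⟨k, u, hu, rfl⟩ := Set.mem_iUnion.1 (hcover hw)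
  rw [mem_ball, dist_eq]
  calc ‖fmap lam j (fmap lam k u) - ((1 + lam / 2 : ℝ) : ℂ)‖
      ≤ lam * (Real.sqrt 3 / 2) + lam ^ 2 * ‖u‖ := norm_fmap_fmap_sub_le h0.le j k u
    _ ≤ lam * (Real.sqrt 3 / 2) + lam ^ 2 * (1 / (1 - lam)) := by gcongr; exact hbound u hu
    _ = lam * (Real.sqrt 3 / 2) + lam ^ 2 / (1 - lam) := by rw [mul_one_div]
    _ < lam := mul_sqrt_three_div_two_add_sq_div_one_sub_lt h0 h1

/-- For 0 < λ < 1/10, the attractor A is contained in the open ball of radius λ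
centered at P = (1 + λ/2, 0). -/
theorem attractor_subset_ball (lam : ℝ) (h0 : 0 < lam) (h1 : lam < 1 / 10)
    (A : Set ℂ) (hne : A.Nonempty) (hcpt : IsCompact A)
    (hA : A = fmap lam 1 '' A ∪ fmap lam 2 '' A) :
    A ⊆ ball (((1 + lam / 2 : ℝ) : ℂ)) lam :=
  attractor_subset_ball_general lam h0 h1 A hcpt hA
end

section
/- Fix 0 < λ < 1/2, and let A be the attractor of f_j(z) = 1 + λ e^{(−1)^j iπ/3} z (j = 1,2). Let Y = {(x,y) : x = 0} be the vertical axis. Then dist(Y, A) ≥ 1 + λ/2 − λ²(1 + 2λ)/(2(1 − λ²)). -/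
/-!
Write `ζ = e^{iπ/3}`: every point of `A` is `1 + λ e b` with `e = ζ^{±1}` and `b ∈ A`. Let `u`, `v`
be the least real parts of `ω A` over the even (`ω³ = 1`) resp. odd (`ω³ = -1`) powers `ω` of `ζ`.
Since `ω (1 + λ e b) = ω + λ (ω e) b` and `ω e` has the other parity, `v ≥ -1 + λ u` and
`u ≥ -1/2 + λ v`, whence `u ≥ -(1 + 2λ) / (2 (1 - λ²))`. Unfolding a point of `A` twice gives
`Re a = 1 + λ/2 + λ² Re (ω c)` with `ω` even and `c ∈ A`.
-/

open Complex

open scoped Real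

namespace Complex

lemma neg_half_le_re_of_pow_three_eq_one {ω : ℂ} (h : ω ^ 3 = 1) : -(1 / 2) ≤ ω.re := by
  have hnormSq : ω.re ^ 2 + ω.im ^ 2 = 1 := by
    have := norm_eq_one_of_pow_eq_one h (by norm_num)
    rw [sq, sq, ← normSq_apply, ← Complex.sq_norm, this, one_pow]
  have hcube : ω.re ^ 3 - 3 * ω.re * ω.im ^ 2 = 1 := by
    have := congrArg re h
    simp only [pow_succ, pow_zero, one_mul, mul_re, mul_im, one_re] at this
    linarith
  -- `4 cos³ θ - 3 cos θ = cos 3θ = 1` factors as `(cos θ - 1) (2 cos θ + 1)² = 0`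
  nlinarith [sq_nonneg (2 * ω.re + 1), sq_nonneg ω.im]

lemma neg_one_le_re_of_pow_three_eq_neg_one {ω : ℂ} (h : ω ^ 3 = -1) : -1 ≤ ω.re := by
  have hnorm : ‖-ω‖ = 1 := norm_eq_one_of_pow_eq_one (by rw [neg_pow, h]; norm_num) (by norm_num)
  have := re_le_norm (-ω)
  rw [hnorm, neg_re] at this
  linarith

lemma exp_neg_one_pow_mul_I_mul_pi_div_three_pow_three (j : ℕ) :
    exp ((-1 : ℂ) ^ j * I * (π / 3)) ^ 3 = -1 := by
  rw [← exp_nat_mul]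
  rcases neg_one_pow_eq_or ℂ j with h | h <;> rw [h]
  · convert exp_pi_mul_I using 2; push_cast; ring
  · convert exp_neg_pi_mul_I using 2; push_cast; ring

lemma re_exp_neg_one_pow_mul_I_mul_pi_div_three (j : ℕ) :
    (exp ((-1 : ℂ) ^ j * I * (π / 3))).re = 1 / 2 := by
  rcases neg_one_pow_eq_or ℂ j with h | h
  · rw [h, show (1 : ℂ) * I * (π / 3) = ((π / 3 : ℝ) : ℂ) * I by push_cast; ring,
      exp_ofReal_mul_I_re, Real.cos_pi_div_three]
  · rw [h, show (-1 : ℂ) * I * (π / 3) = ((-(π / 3) : ℝ) : ℂ) * I by push_cast; ring,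
      exp_ofReal_mul_I_re, Real.cos_neg, Real.cos_pi_div_three]

lemma add_mul_le_re_mul_one_add_mul {lam c m : ℝ} {ω e b : ℂ} (hlam : 0 ≤ lam)
    (hc : c ≤ ω.re) (hm : m ≤ (ω * e * b).re) : c + lam * m ≤ (ω * (1 + lam * e * b)).re := by
  rw [show ω * (1 + lam * e * b) = ω + lam * (ω * e * b) by ring, add_re, re_ofReal_mul]
  gcongr

lemma re_le_dist_of_re_eq_zero {a y : ℂ} (hy : y.re = 0) : a.re ≤ dist a y := by
  simpa [dist_eq, hy] using re_le_norm (a - y)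

end Complex

/-- For `s = 1` (resp. `s = -1`) this is the set of real parts of `A` rotated by the even
(resp. odd) powers of `e^{iπ/3}`. -/
def rotatedRe (A : Set ℂ) (s : ℂ) : Set ℝ :=
  (fun p : ℂ × ℂ => (p.1 * p.2).re) '' ({ω | ω ^ 3 = s} ×ˢ A)

lemma re_mul_mem_rotatedRe {A : Set ℂ} {s ω a : ℂ} (hω : ω ^ 3 = s) (ha : a ∈ A) :
    (ω * a).re ∈ rotatedRe A s :=
  ⟨(ω, a), ⟨hω, ha⟩, rfl⟩

lemma rotatedRe_nonempty {A : Set ℂ} (hA : A.Nonempty) (s : ℂ) : (rotatedRe A s).Nonempty :=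
  let ⟨_, hω⟩ := IsAlgClosed.exists_pow_nat_eq s three_pos
  let ⟨_, ha⟩ := hA
  ⟨_, re_mul_mem_rotatedRe hω ha⟩

lemma IsCompact.rotatedRe {A : Set ℂ} (hA : IsCompact A) (s : ℂ) : IsCompact (rotatedRe A s) :=
  have hroots : {ω : ℂ | ω ^ 3 = s}.Finite :=
    (Polynomial.nthRootsFinset 3 s).finite_toSet.subset fun ω hω => by simpa using hω
  (hroots.isCompact.prod hA).image (continuous_re.comp continuous_mul)

lemma add_mul_mem_lowerBounds_rotatedRe {lam c m : ℝ} {A E : Set ℂ} {t : ℂ}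
    (hA : ∀ a ∈ A, ∃ e ∈ E, ∃ b ∈ A, a = 1 + lam * e * b) (hE : ∀ e ∈ E, e ^ 3 = -1)
    (hlam : 0 ≤ lam) (hc : ∀ ω : ℂ, ω ^ 3 = -t → c ≤ ω.re)
    (hm : m ∈ lowerBounds (rotatedRe A t)) : c + lam * m ∈ lowerBounds (rotatedRe A (-t)) := by
  rintro _ ⟨⟨ω, a⟩, ⟨hω, ha⟩, rfl⟩
  obtain ⟨e, he, b, hb, rfl⟩ := hA a ha
  have hωe : (ω * e) ^ 3 = t := by
    rw [mul_pow, (hω : ω ^ 3 = -t), hE e he]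
    ring
  exact add_mul_le_re_mul_one_add_mul hlam (hc ω hω) (hm (re_mul_mem_rotatedRe hωe hb))

lemma div_one_sub_sq_le_of_le_add_mul {lam a b u v : ℝ} (h0 : 0 ≤ lam) (h1 : lam < 1)
    (hu : a + lam * v ≤ u) (hv : b + lam * u ≤ v) : (a + lam * b) / (1 - lam ^ 2) ≤ u := by
  rw [div_le_iff₀ (by nlinarith)]
  nlinarith [mul_le_mul_of_nonneg_left hv h0]

lemma neg_div_mem_lowerBounds_rotatedRe_one {lam : ℝ} {A E : Set ℂ}
    (hA : ∀ a ∈ A, ∃ e ∈ E, ∃ b ∈ A, a = 1 + lam * e * b) (hE : ∀ e ∈ E, e ^ 3 = -1)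
    (hcpt : IsCompact A) (hne : A.Nonempty) (h0 : 0 ≤ lam) (h1 : lam < 1) :
    -(1 + 2 * lam) / (2 * (1 - lam ^ 2)) ∈ lowerBounds (rotatedRe A 1) := by
  obtain ⟨u, hu⟩ := (hcpt.rotatedRe 1).exists_isLeast (rotatedRe_nonempty hne 1)
  obtain ⟨v, hv⟩ := (hcpt.rotatedRe (-1)).exists_isLeast (rotatedRe_nonempty hne (-1))
  have hvu : -1 + lam * u ≤ v :=
    add_mul_mem_lowerBounds_rotatedRe hA hE h0
      (fun _ hω => neg_one_le_re_of_pow_three_eq_neg_one hω) hu.2 hv.1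
  have huv : -(1 / 2) + lam * v ≤ u :=
    add_mul_mem_lowerBounds_rotatedRe hA hE h0
      (fun _ hω => neg_half_le_re_of_pow_three_eq_one (by rwa [neg_neg] at hω)) hv.2
      (by simpa only [neg_neg] using hu.1)
  have hden : 1 - lam ^ 2 ≠ 0 := by nlinarith
  intro x hx
  calc -(1 + 2 * lam) / (2 * (1 - lam ^ 2)) = (-(1 / 2) + lam * -1) / (1 - lam ^ 2) := by
        field_simp
        ring
    _ ≤ u := div_one_sub_sq_le_of_le_add_mul h0 h1 huv hvu
    _ ≤ x := hu.2 hx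

lemma exists_eq_one_add_mul_of_mem_image_fmap_union {lam : ℝ} {A : Set ℂ} {a : ℂ}
    (ha : a ∈ fmap lam 1 '' A ∪ fmap lam 2 '' A) :
    ∃ e ∈ {e : ℂ | e ^ 3 = -1 ∧ e.re = 1 / 2}, ∃ b ∈ A, a = 1 + lam * e * b := by
  rcases ha with ⟨b, hb, rfl⟩ | ⟨b, hb, rfl⟩ <;>
    exact ⟨_, ⟨exp_neg_one_pow_mul_I_mul_pi_div_three_pow_three _,
      re_exp_neg_one_pow_mul_I_mul_pi_div_three _⟩, b, hb, rfl⟩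

theorem dist_axis_attractor_general (lam : ℝ) (h0 : 0 < lam) (h1 : lam < 1 / 2)
    (A : Set ℂ) (hcpt : IsCompact A)
    (hA : A = fmap lam 1 '' A ∪ fmap lam 2 '' A) :
    ∀ a ∈ A, ∀ y ∈ {z : ℂ | z.re = 0},
      1 + lam / 2 - lam ^ 2 * (1 + 2 * lam) / (2 * (1 - lam ^ 2)) ≤ dist a y := by
  intro a ha y hy
  have hself : ∀ a ∈ A, ∃ e ∈ {e : ℂ | e ^ 3 = -1 ∧ e.re = 1 / 2}, ∃ b ∈ A,
      a = 1 + lam * e * b := fun a ha =>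
    exists_eq_one_add_mul_of_mem_image_fmap_union (hA ▸ ha)
  have hbound := neg_div_mem_lowerBounds_rotatedRe_one hself (fun _ he => he.1) hcpt
    ⟨a, ha⟩ h0.le (by linarith)
  obtain ⟨e, ⟨he, hre⟩, b, hb, rfl⟩ := hself a ha
  obtain ⟨e', ⟨he', -⟩, c, hc, rfl⟩ := hself b hb
  have hee' : (e * e') ^ 3 = 1 := by rw [mul_pow, he, he']; norm_num
  have hinner : 1 / 2 + lam * (-(1 + 2 * lam) / (2 * (1 - lam ^ 2))) ≤
      (e * (1 + lam * e' * c)).re :=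
    add_mul_le_re_mul_one_add_mul h0.le hre.ge (hbound (re_mul_mem_rotatedRe hee' hc))
  calc 1 + lam / 2 - lam ^ 2 * (1 + 2 * lam) / (2 * (1 - lam ^ 2))
      = 1 + lam * (1 / 2 + lam * (-(1 + 2 * lam) / (2 * (1 - lam ^ 2)))) := by ring
    _ ≤ (1 * (1 + lam * e * (1 + lam * e' * c))).re :=
      add_mul_le_re_mul_one_add_mul h0.le one_re.ge (by rwa [one_mul])
    _ ≤ dist _ y := by rw [one_mul]; exact re_le_dist_of_re_eq_zero hy

/-- For 0 < λ < 1/2, every point of the attractor A is at distance at least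
1 + λ/2 − λ²(1+2λ)/(2(1−λ²)) from every point of the vertical axis Y = {x = 0};
i.e. dist(Y, A) is at least this bound. -/
theorem dist_axis_attractor (lam : ℝ) (h0 : 0 < lam) (h1 : lam < 1 / 2)
    (A : Set ℂ) (hne : A.Nonempty) (hcpt : IsCompact A)
    (hA : A = fmap lam 1 '' A ∪ fmap lam 2 '' A) :
    ∀ a ∈ A, ∀ y ∈ {z : ℂ | z.re = 0},
      1 + lam / 2 - lam ^ 2 * (1 + 2 * lam) / (2 * (1 - lam ^ 2)) ≤ dist a y :=
  dist_axis_attractor_general lam h0 h1 A hcpt hA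
end

section
/- Fix 0 < λ < 1/2 and let A be the attractor of f_j(z) = 1 + λ e^{(−1)^j iπ/3} z (j = 1,2). Then dist(f₁(A), f₂(A)) ≥ √3·λ − √3·λ³/(1 − λ). -/
/-!
Write `ω = e^{iπ/3}`, so that `f₁ z = 1 + λ ω̄ z` and `f₂ z = 1 + λ ω z`. The hexagonal norm
`N z = max (|Im z|, |Im (ω z)|, |Im (ω̄ z)|)` is invariant under multiplication by `ω` and `ω̄`,
and `N 1 = √3/2`; at a maximiser of `N` on the compact set `A` this gives `N ≤ ρ := (√3/2)/(1 - λ)`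
on `A`. Feeding this bound back through `A = f₁ A ∪ f₂ A` shows that `Im (c t)` lies within `λ ρ`
of `Im c` on `A` for every `c` preserving `N`, and feeding it back once more that
`Im (ω u) ≥ √3/2 - λ² ρ` and `Im (ω̄ u) ≤ -√3/2 + λ² ρ` on `A`. Since `Im (f₂ u) = λ Im (ω u)`
and `Im (f₁ u) = λ Im (ω̄ u)`, the two pieces are separated by a horizontal strip of width
`√3 λ - √3 λ³/(1 - λ)`.
-/

open Complex

open ComplexConjugate

theorem IsCompact.le_div_one_sub_of_subset_biUnion {X ι : Type*} [TopologicalSpace X]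
    {A : Set X} (hA : IsCompact A) {N : X → ℝ} (hN : ContinuousOn N A) {I : Set ι}
    {f : ι → X → X} (hsub : A ⊆ ⋃ i ∈ I, f i '' A) {C r : ℝ} (hr0 : 0 ≤ r) (hr1 : r < 1)
    (hf : ∀ i ∈ I, ∀ u ∈ A, N (f i u) ≤ C + r * N u) {z : X} (hz : z ∈ A) :
    N z ≤ C / (1 - r) := by
  obtain ⟨z₀, hz₀, hmax⟩ := hA.exists_isMaxOn ⟨z, hz⟩ hN
  obtain ⟨i, hi, u, hu, rfl⟩ := Set.mem_iUnion₂.1 (hsub hz₀)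
  have hmax_le : N (f i u) ≤ C + r * N (f i u) :=
    (hf i hi u hu).trans (by gcongr; exact hmax hu)
  rw [le_div_iff₀ (by linarith)]
  calc N z * (1 - r) ≤ N (f i u) * (1 - r) := mul_le_mul_of_nonneg_right (hmax hz) (by linarith)
    _ ≤ C := by linarith

noncomputable def ω : ℂ := ⟨1 / 2, √3 / 2⟩

lemma exp_pi_div_three_mul_I : exp (Real.pi / 3 * I) = ω := by
  rw [← ofReal_ofNat, ← ofReal_div, exp_mul_I, ← ofReal_cos, ← ofReal_sin,
    Real.cos_pi_div_three, Real.sin_pi_div_three]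
  apply Complex.ext <;> simp [ω]

lemma fmap_one (lam : ℝ) : fmap lam 1 = fun z => 1 + lam * conj ω * z := by
  funext z
  rw [fmap, ← exp_pi_div_three_mul_I, ← exp_conj, map_mul, conj_I, map_div₀, conj_ofReal,
    map_ofNat]
  ring_nf

lemma fmap_two (lam : ℝ) : fmap lam 2 = fun z => 1 + lam * ω * z := by
  funext z
  rw [fmap, ← exp_pi_div_three_mul_I]
  ring_nf

lemma ω_im : ω.im = √3 / 2 := rfl

lemma ω_im_nonneg : 0 ≤ ω.im := by
  rw [ω_im]; positivity

lemma conj_ω_mul_ω : conj ω * ω = 1 := by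
  have : √3 * √3 = 3 := Real.mul_self_sqrt (by norm_num)
  apply Complex.ext <;> simp [ω] <;> nlinarith

lemma ω_mul_ω : ω * ω = -conj ω := by
  have : √3 * √3 = 3 := Real.mul_self_sqrt (by norm_num)
  apply Complex.ext <;> simp [ω] <;> nlinarith

lemma ω_mul_conj_ω : ω * conj ω = 1 := by
  rw [mul_comm, conj_ω_mul_ω]

lemma conj_ω_mul_conj_ω : conj ω * conj ω = -ω := by
  rw [← map_mul, ω_mul_ω, map_neg, conj_conj]

noncomputable def hexNorm (z : ℂ) : ℝ := max |z.im| (max |(ω * z).im| |(conj ω * z).im|)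

lemma continuous_hexNorm : Continuous hexNorm := by
  unfold hexNorm; fun_prop

lemma abs_im_le_hexNorm (z : ℂ) : |z.im| ≤ hexNorm z := le_max_left _ _

lemma hexNorm_one : hexNorm 1 = √3 / 2 := by
  simp [hexNorm, ω]
  positivity

lemma hexNorm_neg (z : ℂ) : hexNorm (-z) = hexNorm z := by
  simp only [hexNorm, mul_neg, neg_im, abs_neg]

lemma hexNorm_ω_mul (z : ℂ) : hexNorm (ω * z) = hexNorm z := by
  simp only [hexNorm, ← mul_assoc, ω_mul_ω, conj_ω_mul_ω, neg_mul, neg_im, abs_neg, one_mul]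
  ac_rfl

lemma hexNorm_conj_ω_mul (z : ℂ) : hexNorm (conj ω * z) = hexNorm z := by
  simp only [hexNorm, ← mul_assoc, conj_ω_mul_conj_ω, ω_mul_conj_ω,
    neg_mul, neg_im, abs_neg, one_mul]
  rw [max_left_comm, max_comm |(conj ω * z).im|]

lemma hexNorm_add_le (z w : ℂ) : hexNorm (z + w) ≤ hexNorm z + hexNorm w := by
  simp only [hexNorm, mul_add, add_im]
  refine max_le ?_ (max_le ?_ ?_) <;> refine (abs_add_le _ _).trans (add_le_add ?_ ?_) <;>
    simp

lemma hexNorm_ofReal_mul {r : ℝ} (hr : 0 ≤ r) (z : ℂ) : hexNorm (r * z) = r * hexNorm z := by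
  simp only [hexNorm, mul_left_comm _ (r : ℂ), im_ofReal_mul, abs_mul, abs_of_nonneg hr,
    mul_max_of_nonneg _ _ hr]

lemma hexNorm_mul_of_mem {w : ℂ} (hw : w ∈ ({conj ω, ω} : Set ℂ)) (z : ℂ) :
    hexNorm (w * z) = hexNorm z := by
  rcases hw with rfl | rfl
  exacts [hexNorm_conj_ω_mul z, hexNorm_ω_mul z]

section
variable {lam : ℝ} {A : Set ℂ}

lemma hexNorm_le (hA : IsCompact A) (h0 : 0 ≤ lam) (h1 : lam < 1)
    (hsub : A ⊆ ⋃ w ∈ ({conj ω, ω} : Set ℂ), (fun s => 1 + (lam : ℂ) * w * s) '' A)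
    {z : ℂ} (hz : z ∈ A) : hexNorm z ≤ √3 / 2 / (1 - lam) := by
  refine hA.le_div_one_sub_of_subset_biUnion continuous_hexNorm.continuousOn hsub h0 h1 ?_ hz
  intro w hw s _
  calc hexNorm (1 + lam * w * s) ≤ hexNorm 1 + hexNorm (lam * (w * s)) := by
        rw [← mul_assoc]; exact hexNorm_add_le _ _
    _ = √3 / 2 + lam * hexNorm s := by
        rw [hexNorm_one, hexNorm_ofReal_mul h0, hexNorm_mul_of_mem hw]

lemma abs_im_mul_sub_im_le (hA : IsCompact A) (h0 : 0 ≤ lam) (h1 : lam < 1)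
    (hsub : A ⊆ ⋃ w ∈ ({conj ω, ω} : Set ℂ), (fun s => 1 + (lam : ℂ) * w * s) '' A)
    {c : ℂ} (hc : ∀ z, hexNorm (c * z) = hexNorm z) {t : ℂ} (ht : t ∈ A) :
    |(c * t).im - c.im| ≤ lam * (√3 / 2 / (1 - lam)) := by
  obtain ⟨w, hw, s, hs, rfl⟩ := Set.mem_iUnion₂.1 (hsub ht)
  have him : (c * (1 + lam * w * s)).im - c.im = lam * (c * (w * s)).im := by
    rw [show c * (1 + lam * w * s) = c + lam * (c * (w * s)) by ring, add_im, im_ofReal_mul]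
    ring
  calc |(c * (1 + lam * w * s)).im - c.im| = lam * |(c * (w * s)).im| := by
        rw [him, abs_mul, abs_of_nonneg h0]
    _ ≤ lam * hexNorm s := by
        gcongr
        exact (abs_im_le_hexNorm _).trans_eq (by rw [hc, hexNorm_mul_of_mem hw])
    _ ≤ lam * (√3 / 2 / (1 - lam)) := by gcongr; exact hexNorm_le hA h0 h1 hsub hs

lemma im_sub_le_im_mul (hA : IsCompact A) (h0 : 0 ≤ lam) (h1 : lam < 1)
    (hsub : A ⊆ ⋃ w ∈ ({conj ω, ω} : Set ℂ), (fun s => 1 + (lam : ℂ) * w * s) '' A)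
    {c : ℂ} (hc : ∀ z, hexNorm (c * z) = hexNorm z)
    (hcw : ∀ w ∈ ({conj ω, ω} : Set ℂ), 0 ≤ (c * w).im) {u : ℂ} (hu : u ∈ A) :
    c.im - lam ^ 2 * (√3 / 2 / (1 - lam)) ≤ (c * u).im := by
  obtain ⟨w, hw, t, ht, rfl⟩ := Set.mem_iUnion₂.1 (hsub hu)
  have hcw_symm : ∀ z, hexNorm (c * w * z) = hexNorm z := fun z => by
    rw [mul_assoc, hc, hexNorm_mul_of_mem hw]
  have him : (c * (1 + lam * w * t)).im = c.im + lam * (c * w * t).im := by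
    rw [show c * (1 + lam * w * t) = c + lam * (c * w * t) by ring, add_im, im_ofReal_mul]
  have hcwt : -(lam * (√3 / 2 / (1 - lam))) ≤ (c * w * t).im := by
    linarith [hcw w hw, (abs_le.1 (abs_im_mul_sub_im_le hA h0 h1 hsub hcw_symm ht)).1]
  rw [him, sq, mul_assoc, sub_eq_add_neg, ← mul_neg]
  gcongr

end

theorem dist_pieces_general (lam : ℝ) (h0 : 0 < lam) (h1 : lam < 1 / 2)
    (A : Set ℂ) (hcpt : IsCompact A)
    (hA : A = fmap lam 1 '' A ∪ fmap lam 2 '' A) :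
    ∀ a ∈ fmap lam 1 '' A, ∀ b ∈ fmap lam 2 '' A,
      Real.sqrt 3 * lam - Real.sqrt 3 * lam ^ 3 / (1 - lam) ≤ dist a b := by
  have hsub : A ⊆ ⋃ w ∈ ({conj ω, ω} : Set ℂ), (fun s => 1 + (lam : ℂ) * w * s) '' A := by
    rw [Set.biUnion_pair, ← fmap_one, ← fmap_two]
    exact hA.le
  have hlam1 : lam < 1 := by linarith
  rintro _ ⟨u₁, hu₁, rfl⟩ _ ⟨u₂, hu₂, rfl⟩
  have hb := im_sub_le_im_mul hcpt h0.le hlam1 hsub (hexNorm_mul_of_mem (Or.inr rfl))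
    (by rintro w (rfl | rfl) <;> simp [ω_mul_conj_ω, ω_mul_ω, ω_im_nonneg]) hu₂
  have ha := im_sub_le_im_mul hcpt h0.le hlam1 hsub (c := -conj ω)
    (fun z => by rw [neg_mul, hexNorm_neg, hexNorm_mul_of_mem (Or.inl rfl)])
    (by rintro w (rfl | rfl) <;> simp [conj_ω_mul_conj_ω, conj_ω_mul_ω, ω_im_nonneg]) hu₁
  simp only [fmap_one, fmap_two]
  calc √3 * lam - √3 * lam ^ 3 / (1 - lam)
      = lam * ((ω.im - lam ^ 2 * (√3 / 2 / (1 - lam)))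
          + ((-conj ω).im - lam ^ 2 * (√3 / 2 / (1 - lam)))) := by
        simp only [neg_im, conj_im, neg_neg, ω_im]
        ring
    _ ≤ lam * ((ω * u₂).im + (-conj ω * u₁).im) := by gcongr
    _ = (1 + lam * ω * u₂ - (1 + lam * conj ω * u₁)).im := by
        simp only [sub_im, add_im, mul_assoc, im_ofReal_mul, neg_mul, neg_im]
        ring
    _ ≤ dist (1 + lam * conj ω * u₁) (1 + lam * ω * u₂) := by
        rw [dist_comm, dist_eq]
        exact (le_abs_self _).trans (abs_im_le_norm _)

/-- For 0 < λ < 1/2, the two first-level pieces f₁(A), f₂(A) of the attractor A satisfy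
dist(f₁(A), f₂(A)) ≥ √3·λ − √3·λ³/(1 − λ). -/
theorem dist_pieces (lam : ℝ) (h0 : 0 < lam) (h1 : lam < 1 / 2)
    (A : Set ℂ) (hne : A.Nonempty) (hcpt : IsCompact A)
    (hA : A = fmap lam 1 '' A ∪ fmap lam 2 '' A) :
    ∀ a ∈ fmap lam 1 '' A, ∀ b ∈ fmap lam 2 '' A,
      Real.sqrt 3 * lam - Real.sqrt 3 * lam ^ 3 / (1 - lam) ≤ dist a b :=
  dist_pieces_general lam h0 h1 A hcpt hA
end

section
/- Fix 0 < λ < 1/2 and define Σ ⊂ ℝ² ≅ ℂ as the closure of the union over all N ∈ ℕ and all j₁,…,j_N ∈ {1,2} of the segments f_{j₁}∘⋯∘f_{j_N}([0,1]), together with [0,1] itself, where f_j(z) = 1 + λ e^{(−1)^j iπ/3} z. Then ℋ¹(Σ) = 1/(1 − 2λ). -/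
open Complex MeasureTheory

/-- Composition f_{j₁} ∘ ⋯ ∘ f_{j_N} indexed by a word w ∈ {1,2}^N (encoded as a list of
booleans, `true ↦ f₁`, `false ↦ f₂`); the empty word gives the identity. -/
noncomputable def fword (lam : ℝ) : List Bool → ℂ → ℂ
  | [] => id
  | b :: w => fmap lam (if b then 1 else 2) ∘ fword lam w

/-- The self-similar tree Σ: the closure of the union of the segments
f_{j₁}∘⋯∘f_{j_N}([0,1]) over all N and all j₁,…,j_N ∈ {1,2} (including [0,1] itself). -/
noncomputable def SigmaTree (lam : ℝ) : Set ℂ :=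
  closure (⋃ w : List Bool, fword lam w '' segment ℝ (0 : ℂ) 1)

open Filter Set Metric Topology
open scoped ENNReal

/-!
Each branch `f_w([0,1])` is a segment of length `λ^|w|`, and distinct branches meet in at most
one point: every branch lies in the sector `|arg z| ≤ π/3`, a nonempty word maps `[0,1]` into the
open sector, and `f₁`, `f₂` send the sector into the lower resp. upper half-plane, which they
leave only through `f_j(0) = 1`. Hence the branches have total measure
`∑ 2^N λ^N = 1/(1 - 2λ)`. A point added by the closure lies, for every `N`, in one of the `2^N`
images under words of length `N` of the invariant disc of radius `1/(1 - λ)`; these covers have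
total diameter `O((2λ)^N)`, so the closure adds an `ℋ¹`-null set.
-/

theorem ENNReal.tsum_pow_length {α : Type*} [Fintype α] (q : ℝ≥0∞) :
    ∑' w : List α, q ^ w.length = (1 - Fintype.card α * q)⁻¹ := by
  calc ∑' w : List α, q ^ w.length
      = ∑' (n : ℕ) (v : List.Vector α n), q ^ v.toList.length := by
        rw [← (Equiv.sigmaFiberEquiv List.length).tsum_eq, ENNReal.tsum_sigma']; rfl
    _ = ∑' (n : ℕ) (_ : List.Vector α n), q ^ n := by simp
    _ = ∑' n : ℕ, (Fintype.card α * q) ^ n := by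
        simp [tsum_fintype, card_vector, mul_pow]
    _ = (1 - Fintype.card α * q)⁻¹ := ENNReal.tsum_geometric _

namespace SigmaTree

variable {lam : ℝ}

lemma norm_exp_rotation (j : ℕ) : ‖exp ((-1 : ℂ) ^ j * I * (Real.pi / 3))‖ = 1 := by
  have : (-1 : ℂ) ^ j * I * (Real.pi / 3) = (((-1 : ℝ) ^ j * (Real.pi / 3) : ℝ) : ℂ) * I := by
    push_cast; ring
  rw [this, norm_exp_ofReal_mul_I]

lemma dist_fmap (j : ℕ) (z z' : ℂ) : dist (fmap lam j z) (fmap lam j z') = |lam| * dist z z' := by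
  simp only [dist_eq, fmap, add_sub_add_left_eq_sub, ← mul_sub, norm_mul, norm_real,
    Real.norm_eq_abs, norm_exp_rotation, mul_one]

lemma dist_fword (w : List Bool) (z z' : ℂ) :
    dist (fword lam w z) (fword lam w z') = |lam| ^ w.length * dist z z' := by
  induction w with
  | nil => simp [fword]
  | cons b w ih => simp only [fword, Function.comp_apply, dist_fmap, ih, List.length_cons]; ring

lemma image_fmap_segment (j : ℕ) (p q : ℂ) :
    fmap lam j '' segment ℝ p q = segment ℝ (fmap lam j p) (fmap lam j q) := by
  let c : ℂ := lam * exp ((-1 : ℂ) ^ j * I * (Real.pi / 3))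
  have h : fmap lam j = ⇑((LinearMap.mulLeft ℝ c).toAffineMap + AffineMap.const ℝ ℂ (1 : ℂ)) := by
    ext z; simp [fmap, c, add_comm, mul_assoc]
  rw [h, image_segment]

def branch (lam : ℝ) (w : List Bool) : Set ℂ := fword lam w '' segment ℝ 0 1

lemma branch_eq_segment (w : List Bool) :
    branch lam w = segment ℝ (fword lam w 0) (fword lam w 1) := by
  induction w with
  | nil => simp [branch, fword]
  | cons b w ih => rw [branch, fword, image_comp, ← branch, ih, image_fmap_segment]; rfl

lemma hausdorffMeasure_branch (h0 : 0 ≤ lam) (w : List Bool) :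
    μH[1] (branch lam w) = ENNReal.ofReal lam ^ w.length := by
  rw [branch_eq_segment, hausdorffMeasure_segment, edist_dist, dist_fword, dist_zero_left,
    norm_one, mul_one, abs_of_nonneg h0, ENNReal.ofReal_pow h0]

lemma lipschitzWith_fword (w : List Bool) :
    LipschitzWith (‖lam‖₊ ^ w.length) (fword lam w) :=
  LipschitzWith.of_dist_le_mul fun z z' => by simp [dist_fword]

lemma isCompact_branch (w : List Bool) : IsCompact (branch lam w) := by
  rw [branch_eq_segment, ← convexHull_pair]
  exact (toFinite _).isCompact_convexHull ℝ

lemma branch_cons (b : Bool) (w : List Bool) :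
    branch lam (b :: w) = fmap lam (if b then 1 else 2) '' branch lam w := by
  rw [branch, fword, image_comp, branch]

lemma fmap_injective (h0 : lam ≠ 0) (j : ℕ) : Function.Injective (fmap lam j) := fun z z' h => by
  simpa [h0] using (dist_fmap (lam := lam) j z z').symm.trans (dist_eq_zero.mpr h)

lemma im_eq_zero_and_re_nonneg_of_mem_segment {z : ℂ} (hz : z ∈ segment ℝ (0 : ℂ) 1) :
    z.im = 0 ∧ 0 ≤ z.re := by
  obtain ⟨t, ht, rfl⟩ := (segment_eq_image' ℝ (0 : ℂ) 1 ▸ hz :)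
  simpa using ht.1

/-- The fixed point of `r ↦ 1 + λ r`: the disc of this radius is invariant under both maps. -/
noncomputable def radius (lam : ℝ) : ℝ := (1 - lam)⁻¹

lemma one_le_radius (h0 : 0 ≤ lam) (h1 : lam < 1) : 1 ≤ radius lam :=
  one_le_inv₀ (by linarith) |>.mpr (by linarith)

lemma mul_radius_lt_one (h1 : lam < 1 / 2) : lam * radius lam < 1 := by
  rw [radius, ← div_eq_mul_inv, div_lt_one (by linarith)]; linarith

lemma norm_fmap_le (h0 : 0 ≤ lam) (j : ℕ) (z : ℂ) : ‖fmap lam j z‖ ≤ 1 + lam * ‖z‖ := by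
  calc ‖fmap lam j z‖ ≤ ‖(1 : ℂ)‖ + ‖(lam : ℂ) * exp ((-1 : ℂ) ^ j * I * (Real.pi / 3)) * z‖ :=
        norm_add_le _ _
    _ = 1 + lam * ‖z‖ := by simp [norm_exp_rotation, abs_of_nonneg h0]

lemma mapsTo_fword_closedBall (h0 : 0 ≤ lam) (h1 : lam < 1) (w : List Bool) :
    MapsTo (fword lam w) (closedBall 0 (radius lam)) (closedBall 0 (radius lam)) := by
  have hR : 1 + lam * radius lam = radius lam := by
    rw [radius]; field_simp [(by linarith : (1 : ℝ) - lam ≠ 0)]; ring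
  induction w with
  | nil => exact mapsTo_id _
  | cons b w ih =>
    refine MapsTo.comp (fun z hz => ?_) ih
    rw [mem_closedBall_zero_iff] at hz ⊢
    calc _ ≤ 1 + lam * ‖z‖ := norm_fmap_le h0 _ z
      _ ≤ 1 + lam * radius lam := by gcongr
      _ = radius lam := hR

lemma segment_subset_closedBall (h0 : 0 ≤ lam) (h1 : lam < 1) :
    segment ℝ (0 : ℂ) 1 ⊆ closedBall 0 (radius lam) :=
  (convex_closedBall _ _).segment_subset (mem_closedBall_self (by linarith [one_le_radius h0 h1]))
    (by simpa using one_le_radius h0 h1)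

/-- The closed sector `|arg z| ≤ π/3`. -/
def cone : Set ℂ := {z | |z.im| ≤ √3 * z.re}

lemma exp_rotation_one : exp ((-1 : ℂ) ^ 1 * I * (Real.pi / 3)) = ⟨1 / 2, -(√3 / 2)⟩ := by
  rw [show (-1 : ℂ) ^ 1 * I * (Real.pi / 3) = ((-(Real.pi / 3) : ℝ) : ℂ) * I by push_cast; ring,
    exp_mul_I, ← ofReal_cos, ← ofReal_sin, Real.cos_neg, Real.sin_neg, Real.cos_pi_div_three,
    Real.sin_pi_div_three]
  apply Complex.ext <;> simp

lemma exp_rotation_two : exp ((-1 : ℂ) ^ 2 * I * (Real.pi / 3)) = ⟨1 / 2, √3 / 2⟩ := by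
  rw [show (-1 : ℂ) ^ 2 * I * (Real.pi / 3) = ((Real.pi / 3 : ℝ) : ℂ) * I by push_cast; ring,
    exp_mul_I, ← ofReal_cos, ← ofReal_sin, Real.cos_pi_div_three, Real.sin_pi_div_three]
  apply Complex.ext <;> simp

lemma fmap_one_re (z : ℂ) : (fmap lam 1 z).re = 1 + lam * (z.re / 2 + √3 / 2 * z.im) := by
  simp only [fmap, exp_rotation_one, add_re, one_re, mul_re, mul_im, ofReal_re, ofReal_im]; ring

lemma fmap_one_im (z : ℂ) : (fmap lam 1 z).im = lam * (z.im / 2 - √3 / 2 * z.re) := by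
  simp only [fmap, exp_rotation_one, add_im, one_im, mul_im, mul_re, ofReal_re, ofReal_im]; ring

lemma fmap_two_re (z : ℂ) : (fmap lam 2 z).re = 1 + lam * (z.re / 2 - √3 / 2 * z.im) := by
  simp only [fmap, exp_rotation_two, add_re, one_re, mul_re, mul_im, ofReal_re, ofReal_im]; ring

lemma fmap_two_im (z : ℂ) : (fmap lam 2 z).im = lam * (z.im / 2 + √3 / 2 * z.re) := by
  simp only [fmap, exp_rotation_two, add_im, one_im, mul_im, mul_re, ofReal_re, ofReal_im]; ring

lemma re_nonneg_of_mem_cone {z : ℂ} (hz : z ∈ cone) : 0 ≤ z.re :=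
  (mul_nonneg_iff_of_pos_left (by positivity)).mp ((abs_nonneg _).trans hz)

lemma two_mul_abs_im_le_of_mem_cone {z : ℂ} (hz : z ∈ cone) : 2 * |z.im| ≤ √3 * ‖z‖ := by
  have h3 : √3 ^ 2 = 3 := Real.sq_sqrt (by norm_num)
  have hnorm : ‖z‖ ^ 2 = z.re ^ 2 + z.im ^ 2 := by rw [Complex.sq_norm, normSq_apply]; ring
  have hsq : z.im ^ 2 ≤ 3 * z.re ^ 2 := by
    have := sq_le_sq' (neg_le_of_abs_le (show |z.im| ≤ √3 * z.re from hz)) (le_of_abs_le hz)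
    rwa [mul_pow, h3] at this
  rw [← abs_two, ← abs_mul]
  refine abs_le_of_sq_le_sq ?_ (by positivity)
  rw [mul_pow, mul_pow, h3, hnorm]
  linarith

lemma abs_im_fmap_lt (h0 : 0 ≤ lam) (h1 : lam < 1 / 2) {j : ℕ} (hj : j = 1 ∨ j = 2) {z : ℂ}
    (hz : z ∈ cone) (hzR : ‖z‖ ≤ radius lam) :
    |(fmap lam j z).im| < √3 * (fmap lam j z).re := by
  have h3 : √3 ^ 2 = 3 := Real.sq_sqrt (by norm_num)
  have hre := re_nonneg_of_mem_cone hz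
  have hsmall : lam * |z.im| < √3 / 2 := by
    have := two_mul_abs_im_le_of_mem_cone hz
    nlinarith [mul_radius_lt_one h1, Real.sqrt_pos.mpr (by norm_num : (0 : ℝ) < 3),
      mul_le_mul_of_nonneg_left hzR h0]
  have hlo := mul_le_mul_of_nonneg_left (neg_abs_le z.im) h0
  have hhi := mul_le_mul_of_nonneg_left (le_abs_self z.im) h0
  have hpos := mul_nonneg h0 hre
  rcases hj with rfl | rfl
  · rw [fmap_one_re, fmap_one_im, abs_lt]
    constructor <;> nlinarith
  · rw [fmap_two_re, fmap_two_im, abs_lt]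
    constructor <;> nlinarith

lemma branch_nil : branch lam [] = segment ℝ 0 1 := by simp [branch, fword]

lemma segment_subset_cone : segment ℝ (0 : ℂ) 1 ⊆ cone := fun z hz => by
  obtain ⟨him, hre⟩ := im_eq_zero_and_re_nonneg_of_mem_segment hz
  show |z.im| ≤ √3 * z.re
  rw [him, abs_zero]
  positivity

lemma branch_subset (h0 : 0 ≤ lam) (h1 : lam < 1 / 2) (w : List Bool) :
    branch lam w ⊆ closedBall 0 (radius lam) ∩ cone := by
  have hball : ∀ w, branch lam w ⊆ closedBall 0 (radius lam) := fun w =>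
    (image_mono (segment_subset_closedBall h0 (by linarith))).trans
      (mapsTo_fword_closedBall h0 (by linarith) w).image_subset
  refine subset_inter (hball w) ?_
  induction w with
  | nil => exact branch_nil.trans_subset segment_subset_cone
  | cons b w ih =>
    rw [branch_cons]
    rintro _ ⟨z, hz, rfl⟩
    exact (abs_im_fmap_lt h0 h1 (by cases b <;> simp) (ih hz)
      (mem_closedBall_zero_iff.mp (hball w hz))).le

lemma eq_zero_of_mem_branch (h0 : 0 ≤ lam) (h1 : lam < 1 / 2) {w : List Bool} {z : ℂ}
    (hz : z ∈ branch lam w) (h : |z.im| = √3 * z.re) : z = 0 := by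
  cases w with
  | nil =>
    obtain ⟨him, -⟩ := im_eq_zero_and_re_nonneg_of_mem_segment (branch_nil ▸ hz)
    rw [him, abs_zero, eq_comm, mul_eq_zero] at h
    exact Complex.ext (h.resolve_left (by positivity)) him
  | cons b w =>
    rw [branch_cons] at hz
    obtain ⟨a, ha, rfl⟩ := hz
    obtain ⟨haR, hac⟩ := branch_subset h0 h1 w ha
    exact absurd h (abs_im_fmap_lt h0 h1 (by cases b <;> simp) hac
      (mem_closedBall_zero_iff.mp haR)).ne

lemma fmap_eq_one_of_im_eq_zero (h0 : 0 < lam) (h1 : lam < 1 / 2) {j : ℕ} (hj : j = 1 ∨ j = 2)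
    {w : List Bool} {z : ℂ} (hz : z ∈ branch lam w) (him : (fmap lam j z).im = 0) :
    fmap lam j z = 1 := by
  suffices z = 0 by simp [this, fmap]
  refine eq_zero_of_mem_branch h0.le h1 hz ?_
  have hre := re_nonneg_of_mem_cone (branch_subset h0.le h1 w hz).2
  rcases hj with rfl | rfl
  · rw [fmap_one_im, mul_eq_zero, or_iff_right h0.ne'] at him
    rw [show z.im = √3 * z.re by linarith, abs_of_nonneg (by positivity)]
  · rw [fmap_two_im, mul_eq_zero, or_iff_right h0.ne'] at him
    rw [show z.im = -(√3 * z.re) by linarith, abs_neg, abs_of_nonneg (by positivity)]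

lemma im_fmap_one_nonpos (h0 : 0 ≤ lam) {z : ℂ} (hz : z ∈ cone) : (fmap lam 1 z).im ≤ 0 := by
  rw [fmap_one_im]
  exact mul_nonpos_of_nonneg_of_nonpos h0 (by linarith [le_of_abs_le hz.out])

lemma im_fmap_two_nonneg (h0 : 0 ≤ lam) {z : ℂ} (hz : z ∈ cone) : 0 ≤ (fmap lam 2 z).im := by
  rw [fmap_two_im]
  exact mul_nonneg h0 (by linarith [neg_le_of_abs_le hz.out])

lemma segment_inter_branch_cons_subset (h0 : 0 < lam) (h1 : lam < 1 / 2) (b : Bool)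
    (w : List Bool) : segment ℝ 0 1 ∩ branch lam (b :: w) ⊆ {1} := by
  rintro _ ⟨hx, hxb⟩
  rw [branch_cons] at hxb
  obtain ⟨z, hz, rfl⟩ := hxb
  exact fmap_eq_one_of_im_eq_zero h0 h1 (by cases b <;> simp) hz
    (im_eq_zero_and_re_nonneg_of_mem_segment hx).1

lemma branch_true_inter_branch_false_subset (h0 : 0 < lam) (h1 : lam < 1 / 2)
    (w w' : List Bool) : branch lam (true :: w) ∩ branch lam (false :: w') ⊆ {1} := by
  rintro x ⟨hx, hx'⟩
  simp only [branch_cons, if_true, Bool.false_eq_true, if_false] at hx hx'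
  obtain ⟨z, hz, rfl⟩ := hx
  obtain ⟨z', hz', hzz'⟩ := hx'
  refine fmap_eq_one_of_im_eq_zero h0 h1 (Or.inl rfl) hz
    (le_antisymm (im_fmap_one_nonpos h0.le (branch_subset h0.le h1 w hz).2) ?_)
  rw [← show fmap lam 2 z' = fmap lam 1 z from hzz']
  exact im_fmap_two_nonneg h0.le (branch_subset h0.le h1 w' hz').2

lemma pairwise_subsingleton_inter_branch (h0 : 0 < lam) (h1 : lam < 1 / 2) :
    Pairwise fun w w' => (branch lam w ∩ branch lam w').Subsingleton := by
  intro w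
  induction w with
  | nil =>
    rintro (_ | ⟨b, w'⟩) hne
    · exact absurd rfl hne
    · rw [branch_nil]
      exact subsingleton_singleton.anti (segment_inter_branch_cons_subset h0 h1 b w')
  | cons b w ih =>
    rintro (_ | ⟨b', w'⟩) hne
    · rw [inter_comm, branch_nil]
      exact subsingleton_singleton.anti (segment_inter_branch_cons_subset h0 h1 b w)
    obtain rfl | hb := eq_or_ne b b'
    · rw [branch_cons, branch_cons, ← image_inter (fmap_injective h0.ne' _)]
      exact (ih fun h => hne (h ▸ rfl)).image _
    cases b <;> cases b' <;> simp only [ne_eq, not_true_eq_false] at hb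
    · rw [inter_comm]
      exact subsingleton_singleton.anti (branch_true_inter_branch_false_subset h0 h1 w' w)
    · exact subsingleton_singleton.anti (branch_true_inter_branch_false_subset h0 h1 w w')

lemma hausdorffMeasure_iUnion_branch (h0 : 0 < lam) (h1 : lam < 1 / 2) :
    μH[1] (⋃ w, branch lam w) = ENNReal.ofReal (1 / (1 - 2 * lam)) := by
  have := Measure.nullSingletonClass_hausdorff ℂ one_pos
  rw [measure_iUnion₀
    (fun w w' hne => (pairwise_subsingleton_inter_branch h0 h1 hne).measure_zero _)
    (fun w => (isCompact_branch w).isClosed.measurableSet.nullMeasurableSet)]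
  simp_rw [hausdorffMeasure_branch h0.le]
  rw [one_div, ENNReal.ofReal_inv_of_pos (by linarith), ENNReal.ofReal_sub _ (by positivity),
    ENNReal.ofReal_one, ENNReal.ofReal_mul zero_le_two, ENNReal.ofReal_ofNat]
  simpa using ENNReal.tsum_pow_length (α := Bool) (ENNReal.ofReal lam)

def tail (lam : ℝ) (N : ℕ) : Set ℂ :=
  ⋃ w : List.Vector Bool N, fword lam w.toList '' closedBall 0 (radius lam)

lemma isClosed_tail (N : ℕ) : IsClosed (tail lam N) :=
  isClosed_iUnion_of_finite fun _ =>
    ((isCompact_closedBall _ _).image (lipschitzWith_fword _).continuous).isClosed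

lemma fword_append (w w' : List Bool) : fword lam (w ++ w') = fword lam w ∘ fword lam w' := by
  induction w with
  | nil => rfl
  | cons b w ih => rw [List.cons_append, fword, fword, ih, Function.comp_assoc]

lemma branch_subset_tail (h0 : 0 ≤ lam) (h1 : lam < 1) {N : ℕ} {w : List Bool}
    (hN : N ≤ w.length) : branch lam w ⊆ tail lam N := by
  rintro _ ⟨z, hz, rfl⟩
  have hsplit := congrFun (fword_append (lam := lam) (w.take N) (w.drop N)) z
  rw [List.take_append_drop] at hsplit
  refine mem_iUnion.mpr ⟨⟨w.take N, List.length_take_of_le hN⟩, hsplit ▸ ?_⟩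
  exact mem_image_of_mem _ (mapsTo_fword_closedBall h0 h1 _ (segment_subset_closedBall h0 h1 hz))

lemma closure_iUnion_branch_subset (h0 : 0 ≤ lam) (h1 : lam < 1) :
    closure (⋃ w, branch lam w) ⊆ (⋃ w, branch lam w) ∪ ⋂ N, tail lam N := by
  rw [union_iInter]
  refine subset_iInter fun N => ?_
  have hclosed : IsClosed ((⋃ w ∈ {w : List Bool | w.length < N}, branch lam w) ∪ tail lam N) :=
    ((List.finite_length_lt Bool N).isClosed_biUnion fun w _ =>
      (isCompact_branch w).isClosed).union (isClosed_tail N)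
  refine (closure_minimal ?_ hclosed).trans (union_subset_union_left _ (iUnion₂_subset_iUnion _ _))
  refine iUnion_subset fun w => ?_
  rcases lt_or_ge w.length N with hw | hw
  · exact subset_union_of_subset_left (subset_biUnion_of_mem (u := fun w => branch lam w) hw) _
  · exact subset_union_of_subset_right (branch_subset_tail h0 h1 hw) _

lemma ediam_fword_image_le (w : List Bool) (s : Set ℂ) :
    ediam (fword lam w '' s) ≤ ‖lam‖ₑ ^ w.length * ediam s := by
  simpa [enorm_eq_nnnorm] using (lipschitzWith_fword w).ediam_image_le s

lemma hausdorffMeasure_iInter_tail (h : 2 * |lam| < 1) : μH[1] (⋂ N, tail lam N) = 0 := by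
  set D := ediam (closedBall (0 : ℂ) (radius lam))
  have hlim : ∀ q : ℝ≥0∞, q < 1 → Tendsto (fun N : ℕ => D * q ^ N) atTop (𝓝 0) := fun q hq => by
    simpa using ENNReal.Tendsto.const_mul (ENNReal.tendsto_pow_atTop_nhds_zero_of_lt_one hq)
      (Or.inr isBounded_closedBall.ediam_ne_top)
  have hq : 2 * ‖lam‖ₑ < 1 := by
    rw [Real.enorm_eq_ofReal_abs, ← ENNReal.ofReal_ofNat, ← ENNReal.ofReal_mul zero_le_two]
    exact ENNReal.ofReal_lt_one.mpr h
  have hsum (N : ℕ) : ∑' w : List.Vector Bool N,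
      ediam (fword lam w.toList '' closedBall 0 (radius lam)) ^ (1 : ℝ) ≤ D * (2 * ‖lam‖ₑ) ^ N :=
    calc _ ≤ ∑' _ : List.Vector Bool N, ‖lam‖ₑ ^ N * D := ENNReal.tsum_le_tsum fun w => by
          simpa using ediam_fword_image_le w.toList (closedBall 0 (radius lam))
      _ = D * (2 * ‖lam‖ₑ) ^ N := by
        simp only [tsum_fintype, Finset.sum_const, Finset.card_univ, card_vector,
          Fintype.card_bool, nsmul_eq_mul, Nat.cast_pow, Nat.cast_ofNat, mul_pow]
        ring
  refine le_antisymm ?_ zero_le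
  calc μH[1] (⋂ N, tail lam N)
      ≤ liminf (fun N => ∑' w : List.Vector Bool N,
          ediam (fword lam w.toList '' closedBall 0 (radius lam)) ^ (1 : ℝ)) atTop :=
        Measure.hausdorffMeasure_le_liminf_tsum _ _ (fun N => D * ‖lam‖ₑ ^ N)
          (hlim _ ((le_mul_of_one_le_left zero_le one_le_two).trans_lt hq)) _
          (Eventually.of_forall fun N w => by
            simpa [mul_comm] using ediam_fword_image_le w.toList (closedBall 0 (radius lam)))
          (Eventually.of_forall fun N => iInter_subset _ N)
    _ ≤ liminf (fun N => D * (2 * ‖lam‖ₑ) ^ N) atTop := liminf_le_liminf (.of_forall hsum)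
    _ = 0 := (hlim _ hq).liminf_eq

end SigmaTree

/-- For 0 < λ < 1/2, the self-similar tree Σ has total length ℋ¹(Σ) = 1/(1 − 2λ). -/
theorem length_SigmaTree (lam : ℝ) (h0 : 0 < lam) (h1 : lam < 1 / 2) :
    μH[1] (SigmaTree lam) = ENNReal.ofReal (1 / (1 - 2 * lam)) := by
  have htail : μH[1] (⋂ N, SigmaTree.tail lam N) = 0 :=
    SigmaTree.hausdorffMeasure_iInter_tail (by rw [abs_of_pos h0]; linarith)
  have hle : μH[1] (SigmaTree lam) ≤ μH[1] (⋃ w, SigmaTree.branch lam w) :=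
    calc μH[1] (SigmaTree lam)
        ≤ μH[1] ((⋃ w, SigmaTree.branch lam w) ∪ ⋂ N, SigmaTree.tail lam N) :=
          measure_mono (SigmaTree.closure_iUnion_branch_subset h0.le (by linarith))
      _ ≤ μH[1] (⋃ w, SigmaTree.branch lam w) + μH[1] (⋂ N, SigmaTree.tail lam N) :=
          measure_union_le _ _
      _ = μH[1] (⋃ w, SigmaTree.branch lam w) := by rw [htail, add_zero]
  rw [le_antisymm hle (measure_mono subset_closure), SigmaTree.hausdorffMeasure_iUnion_branch h0 h1]
end

section
/- For 0 < λ < 1/25 and d ≤ 0 the following strict inequality holds: 1 − d + λ/2 − λ²/(2(1−λ²)) − λ³/(2(1−λ²)) + √3·λ − √3·λ³/(1−λ) > 1/(1−2λ) − d. -/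
/-! Cancelling `d` and clearing the positive denominator `2 (1 - λ) (1 - 2λ)`, the difference of
the two sides is `λ (2√3 (1 - λ - λ²)(1 - 2λ) - (3 - 4λ²))`. For `λ ≤ 1/25` the product
`(1 - λ - λ²)(1 - 2λ)` is at least `1 - 3λ ≥ 22/25`, and `2 · (12/7) · (22/25) > 3` with
`12/7 < √3`. -/

lemma sqrt_three_gt : (12 / 7 : ℝ) < Real.sqrt 3 :=
  Real.lt_sqrt_of_sq_lt (by norm_num)

lemma key_inequality_sub_eq (lam s d : ℝ) (h1 : 1 - lam ≠ 0) (h2 : 1 + lam ≠ 0)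
    (h3 : 1 - 2 * lam ≠ 0) :
    (1 - d + lam / 2 - lam ^ 2 / (2 * (1 - lam ^ 2)) - lam ^ 3 / (2 * (1 - lam ^ 2)) +
        s * lam - s * lam ^ 3 / (1 - lam)) - (1 / (1 - 2 * lam) - d)
      = lam * (2 * s * ((1 - lam - lam ^ 2) * (1 - 2 * lam)) - (3 - 4 * lam ^ 2))
          / (2 * (1 - lam) * (1 - 2 * lam)) := by
  rw [show 1 - lam ^ 2 = (1 - lam) * (1 + lam) by ring]
  -- `field_simp` only recognises the side condition in its own normal form `1 - lam * 2`
  have h3' : 1 - lam * 2 ≠ 0 := by rwa [mul_comm]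
  field_simp
  ring

lemma three_sub_lt_two_sqrt_three_mul {lam : ℝ} (h0 : 0 ≤ lam) (h1 : lam ≤ 1 / 25) :
    3 - 4 * lam ^ 2 < 2 * Real.sqrt 3 * ((1 - lam - lam ^ 2) * (1 - 2 * lam)) := by
  have hp : (22 / 25 : ℝ) ≤ (1 - lam - lam ^ 2) * (1 - 2 * lam) := by
    nlinarith [pow_nonneg h0 2, pow_nonneg h0 3]
  calc 3 - 4 * lam ^ 2 ≤ 3 := by nlinarith
    _ < 2 * (12 / 7) * (22 / 25) := by norm_num
    _ ≤ 2 * Real.sqrt 3 * ((1 - lam - lam ^ 2) * (1 - 2 * lam)) := by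
      gcongr
      exact sqrt_three_gt.le

theorem key_inequality_general (lam d : ℝ) (h0 : 0 < lam) (h1 : lam < 1 / 25) :
    1 - d + lam / 2 - lam ^ 2 / (2 * (1 - lam ^ 2)) - lam ^ 3 / (2 * (1 - lam ^ 2)) +
        Real.sqrt 3 * lam - Real.sqrt 3 * lam ^ 3 / (1 - lam)
      > 1 / (1 - 2 * lam) - d := by
  have hlam1 : 0 < 1 - lam := by linarith
  have hlam2 : 0 < 1 - 2 * lam := by linarith
  rw [gt_iff_lt, ← sub_pos,
    key_inequality_sub_eq lam _ d hlam1.ne' (by linarith) hlam2.ne']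
  have hnum := three_sub_lt_two_sqrt_three_mul h0.le h1.le
  exact div_pos (mul_pos h0 (by linarith)) (by positivity)

/-- Key numerical inequality: for 0 < λ < 1/25 and d ≤ 0,
1 − d + λ/2 − λ²/(2(1−λ²)) − λ³/(2(1−λ²)) + √3λ − √3λ³/(1−λ) > 1/(1−2λ) − d. -/
theorem key_inequality (lam d : ℝ) (h0 : 0 < lam) (h1 : lam < 1 / 25) (hd : d ≤ 0) :
    1 - d + lam / 2 - lam ^ 2 / (2 * (1 - lam ^ 2)) - lam ^ 3 / (2 * (1 - lam ^ 2)) +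
        Real.sqrt 3 * lam - Real.sqrt 3 * lam ^ 3 / (1 - lam)
      > 1 / (1 - 2 * lam) - d :=
  key_inequality_general lam d h0 h1
end
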